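/- For K ≤ 0 and N ∈ (1,∞), the function h(ε) = (∫₀^{9ε/2} S_K^N(t) dt) / (∫₀^{ε/2} S_K^N(t) dt), defined for ε > 0, satisfies lim_{ε→0⁺} h(ε) = 9^N; consequently h extends to a continuous function on [0,∞) and, for every D > 0, h is bounded on (0,D]. -/

import Mathlib

open MeasureTheory Metric

/-- The model volume density `S_K^N` for `K ≤ 0`, `1 < N < ∞`. -/
noncomputable def SKN (K N t : ℝ) : ℝ :=
  if K = 0 then t ^ (N - 1)
  else Real.sinh (Real.sqrt (|K| / (N - 1)) * t) ^ (N - 1)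

/-!
Write `S_K^N = s^(N-1)` with `s t = t` or `s t = sinh (c t)`. Since `s 0 = 0` and `s' 0 ≠ 0`,
`s (9t) / s t → 9`, hence `S_K^N (9t) / S_K^N t → 9^(N-1)`, and L'Hôpital's rule applied to the
primitives (whose derivatives produce the extra factor `9`) gives the limit `9^N`. Extended by
this value at `0`, the ratio is continuous on `[0, ∞)`, hence bounded on the compact `[0, D]`.
-/

open Real Filter Set Topology

theorem tendsto_apply_mul_div_apply_of_hasDerivAt {g : ℝ → ℝ} {d : ℝ} (hg : HasDerivAt g d 0)
    (hg0 : g 0 = 0) (hd : d ≠ 0) (a : ℝ) :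
    Tendsto (fun x => g (a * x) / g x) (𝓝[≠] 0) (𝓝 a) := by
  have hga : HasDerivAt (fun x => g (a * x)) (d * a) 0 :=
    hg.comp_of_eq (0 : ℝ) ((hasDerivAt_id 0).const_mul a) (by simp) |>.congr_deriv (by simp)
  rw [hasDerivAt_iff_tendsto_slope] at hg hga
  have := hga.div hg hd
  rw [mul_div_cancel_left₀ a hd] at this
  refine this.congr' ?_
  filter_upwards [self_mem_nhdsWithin] with x (hx : x ≠ 0)
  simp only [Pi.div_apply, slope_def_field, mul_zero, hg0, sub_zero]
  field_simp

noncomputable def generalizedSin (K N t : ℝ) : ℝ :=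
  if K = 0 then t else sinh (√(|K| / (N - 1)) * t)

theorem SKN_eq_generalizedSin_rpow (K N t : ℝ) : SKN K N t = generalizedSin K N t ^ (N - 1) := by
  unfold SKN generalizedSin; split_ifs <;> rfl

theorem generalizedSin_zero (K N : ℝ) : generalizedSin K N 0 = 0 := by
  simp [generalizedSin]

theorem continuous_generalizedSin (K N : ℝ) : Continuous (generalizedSin K N) := by
  unfold generalizedSin; split_ifs <;> fun_prop

theorem hasDerivAt_generalizedSin_zero (K N : ℝ) :
    HasDerivAt (generalizedSin K N) (if K = 0 then 1 else √(|K| / (N - 1))) 0 := by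
  unfold generalizedSin
  split_ifs
  · exact hasDerivAt_id 0
  · simpa using ((hasDerivAt_id (0 : ℝ)).const_mul (√(|K| / (N - 1)))).sinh

theorem generalizedSin_pos {K N t : ℝ} (hN : 1 < N) (ht : 0 < t) : 0 < generalizedSin K N t := by
  unfold generalizedSin
  split_ifs with hK
  · exact ht
  · have : 0 < √(|K| / (N - 1)) := sqrt_pos.2 (div_pos (abs_pos.2 hK) (sub_pos.2 hN))
    exact sinh_pos_iff.2 (mul_pos this ht)

theorem exists_hasDerivAt_generalizedSin_zero_ne_zero (K : ℝ) {N : ℝ} (hN : 1 < N) :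
    ∃ d ≠ 0, HasDerivAt (generalizedSin K N) d 0 := by
  refine ⟨_, ?_, hasDerivAt_generalizedSin_zero K N⟩
  split_ifs with hK
  · exact one_ne_zero
  · exact (sqrt_pos.2 (div_pos (abs_pos.2 hK) (sub_pos.2 hN))).ne'

theorem generalizedSin_nonneg {K N t : ℝ} (hN : 1 < N) (ht : 0 ≤ t) :
    0 ≤ generalizedSin K N t := by
  rcases ht.eq_or_lt with rfl | ht
  · rw [generalizedSin_zero]
  · exact (generalizedSin_pos hN ht).le

theorem continuous_SKN (K : ℝ) {N : ℝ} (hN : 1 < N) : Continuous (SKN K N) := by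
  simp_rw [funext (SKN_eq_generalizedSin_rpow K N)]
  exact (continuous_rpow_const (sub_nonneg.2 hN.le)).comp (continuous_generalizedSin K N)

theorem SKN_pos {K N t : ℝ} (hN : 1 < N) (ht : 0 < t) : 0 < SKN K N t := by
  rw [SKN_eq_generalizedSin_rpow]
  exact rpow_pos_of_pos (generalizedSin_pos hN ht) _

theorem tendsto_SKN_mul_div_SKN (K : ℝ) {N a : ℝ} (hN : 1 < N) (ha : 0 ≤ a) :
    Tendsto (fun t => SKN K N (a * t) / SKN K N t) (𝓝[>] 0) (𝓝 (a ^ (N - 1))) := by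
  obtain ⟨d, hd, hderiv⟩ := exists_hasDerivAt_generalizedSin_zero_ne_zero K hN
  have hsin := (tendsto_apply_mul_div_apply_of_hasDerivAt hderiv (generalizedSin_zero K N) hd
    a).mono_left (nhdsWithin_mono 0 fun x (hx : 0 < x) => hx.ne')
  have hrpow := continuousAt_rpow_const a (N - 1) (Or.inr (sub_nonneg.2 hN.le))
  refine (hrpow.tendsto.comp hsin).congr' ?_
  filter_upwards [self_mem_nhdsWithin] with t (ht : 0 < t)
  rw [Function.comp_apply, div_rpow (generalizedSin_nonneg hN (mul_nonneg ha ht.le))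
    (generalizedSin_nonneg hN ht.le), SKN_eq_generalizedSin_rpow, SKN_eq_generalizedSin_rpow]

theorem tendsto_integral_mul_div_integral {f : ℝ → ℝ} (hf : Continuous f)
    (hf0 : ∀ t > 0, f t ≠ 0) {a L : ℝ} (hlim : Tendsto (fun t => f (a * t) / f t) (𝓝[>] 0) (𝓝 L)) :
    Tendsto (fun t => (∫ s in 0..a * t, f s) / ∫ s in 0..t, f s) (𝓝[>] 0) (𝓝 (a * L)) := by
  have hF : ∀ x, HasDerivAt (fun x => ∫ s in 0..x, f s) (f x) x := fun x =>
    (hf.integral_hasStrictDerivAt 0 x).hasDerivAt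
  have hFa : ∀ t, HasDerivAt (fun t => ∫ s in 0..a * t, f s) (f (a * t) * a) t := fun t =>
    (hF (a * t)).comp t ((hasDerivAt_id t).const_mul a |>.congr_deriv (mul_one a))
  have hprim : Continuous fun x => ∫ s in 0..x, f s :=
    continuous_iff_continuousAt.2 fun x => (hF x).continuousAt
  have hzero : ∀ {g : ℝ → ℝ}, Continuous g → g 0 = 0 →
      Tendsto (fun t => ∫ s in 0..g t, f s) (𝓝[>] 0) (𝓝 0) := fun {g} hg hg0 => by
    simpa [hg0, Function.comp_def] using ((hprim.comp hg).tendsto 0).mono_left nhdsWithin_le_nhds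
  refine HasDerivAt.lhopital_zero_nhdsGT (.of_forall hFa) (.of_forall hF) ?_
    (hzero (continuous_const.mul continuous_id) (mul_zero a)) (hzero continuous_id rfl) ?_
  · filter_upwards [self_mem_nhdsWithin] with t ht using hf0 t ht
  · simpa only [mul_div_right_comm, mul_comm L] using hlim.mul_const a

theorem continuousOn_integral_mul_div_integral {f : ℝ → ℝ} (hf : Continuous f)
    (hpos : ∀ t > 0, 0 < f t) (a : ℝ) :
    ContinuousOn (fun t => (∫ s in 0..a * t, f s) / ∫ s in 0..t, f s) (Ioi 0) := by
  have hprim : Continuous fun x => ∫ s in 0..x, f s :=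
    intervalIntegral.continuous_primitive (fun _ _ => hf.intervalIntegrable _ _) 0
  refine (hprim.comp (continuous_const.mul continuous_id)).continuousOn.div hprim.continuousOn
    fun t (ht : 0 < t) => ?_
  exact (intervalIntegral.intervalIntegral_pos_of_pos_on (hf.intervalIntegrable 0 t)
    (fun s hs => hpos s hs.1) ht).ne'

theorem continuousOn_update_Ici_of_tendsto {h : ℝ → ℝ} {a L : ℝ} (hc : ContinuousOn h (Ioi a))
    (hl : Tendsto h (𝓝[>] a) (𝓝 L)) : ContinuousOn (Function.update h a L) (Ici a) := by
  intro x (hx : a ≤ x)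
  rcases hx.eq_or_lt with rfl | hx
  · rwa [continuousWithinAt_update_same, Ici_sdiff_left]
  · refine ((hc.continuousAt (Ioi_mem_nhds hx)).congr ?_).continuousWithinAt
    filter_upwards [Ioi_mem_nhds hx] with y (hy : a < y)
    exact (Function.update_of_ne hy.ne' ..).symm

theorem stmt_5_general (K N : ℝ) (hN : 1 < N) :
    Filter.Tendsto
      (fun ε : ℝ => (∫ t in (0:ℝ)..(9 * ε / 2), SKN K N t) /
        ∫ t in (0:ℝ)..(ε / 2), SKN K N t)
      (nhdsWithin 0 (Set.Ioi 0)) (nhds ((9:ℝ) ^ N)) ∧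
    (∃ g : ℝ → ℝ, ContinuousOn g (Set.Ici 0) ∧
      ∀ ε > (0:ℝ), g ε = (∫ t in (0:ℝ)..(9 * ε / 2), SKN K N t) /
        ∫ t in (0:ℝ)..(ε / 2), SKN K N t) ∧
    (∀ D > (0:ℝ), ∃ M : ℝ, ∀ ε : ℝ, 0 < ε → ε ≤ D →
      (∫ t in (0:ℝ)..(9 * ε / 2), SKN K N t) /
        (∫ t in (0:ℝ)..(ε / 2), SKN K N t) ≤ M) := by
  set h := fun ε : ℝ => (∫ t in (0:ℝ)..(9 * ε / 2), SKN K N t) / ∫ t in (0:ℝ)..(ε / 2), SKN K N t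
  have hh : h = (fun t => (∫ s in 0..9 * t, SKN K N s) / ∫ s in 0..t, SKN K N s) ∘ (· / 2) := by
    funext ε; simp only [h, Function.comp_apply, mul_div_assoc]
  have hhalf : Tendsto (· / 2 : ℝ → ℝ) (𝓝[>] 0) (𝓝[>] 0) := tendsto_nhdsWithin_iff.2
    ⟨by simpa using ((continuous_id.div_const (2:ℝ)).tendsto 0).mono_left nhdsWithin_le_nhds,
      by filter_upwards [self_mem_nhdsWithin] with x (hx : 0 < x) using half_pos hx⟩
  have h9 : (9:ℝ) ^ N = 9 * 9 ^ (N - 1) := by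
    rw [rpow_sub_one (by norm_num), mul_div_cancel₀ _ (by norm_num)]
  have hlim : Tendsto h (𝓝[>] 0) (𝓝 (9 ^ N)) := by
    rw [hh, h9]
    exact (tendsto_integral_mul_div_integral (continuous_SKN K hN)
      (fun t ht => (SKN_pos hN ht).ne') (tendsto_SKN_mul_div_SKN K hN (by norm_num))).comp hhalf
  have hcont : ContinuousOn h (Ioi 0) := by
    rw [hh]
    exact (continuousOn_integral_mul_div_integral (continuous_SKN K hN)
      (fun t ht => SKN_pos hN ht) 9).comp (continuous_id.div_const 2).continuousOn
      fun x (hx : 0 < x) => half_pos hx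
  have hext := continuousOn_update_Ici_of_tendsto hcont hlim
  have hext_eq : ∀ ε > (0:ℝ), Function.update h 0 (9 ^ N) ε = h ε := fun ε hε =>
    Function.update_of_ne hε.ne' ..
  refine ⟨hlim, ⟨_, hext, hext_eq⟩, fun D _ => ?_⟩
  obtain ⟨M, hM⟩ := isCompact_Icc.bddAbove_image (hext.mono (Icc_subset_Ici_self : Icc 0 D ⊆ _))
  exact ⟨M, fun ε hε hεD => (hext_eq ε hε).symm.trans_le (hM ⟨ε, ⟨hε.le, hεD⟩, rfl⟩)⟩

theorem stmt_5 (K N : ℝ) (hK : K ≤ 0) (hN : 1 < N) :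
    Filter.Tendsto
      (fun ε : ℝ => (∫ t in (0:ℝ)..(9 * ε / 2), SKN K N t) /
        ∫ t in (0:ℝ)..(ε / 2), SKN K N t)
      (nhdsWithin 0 (Set.Ioi 0)) (nhds ((9:ℝ) ^ N)) ∧
    (∃ g : ℝ → ℝ, ContinuousOn g (Set.Ici 0) ∧
      ∀ ε > (0:ℝ), g ε = (∫ t in (0:ℝ)..(9 * ε / 2), SKN K N t) /
        ∫ t in (0:ℝ)..(ε / 2), SKN K N t) ∧
    (∀ D > (0:ℝ), ∃ M : ℝ, ∀ ε : ℝ, 0 < ε → ε ≤ D →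
      (∫ t in (0:ℝ)..(9 * ε / 2), SKN K N t) /
        (∫ t in (0:ℝ)..(ε / 2), SKN K N t) ≤ M) :=
  stmt_5_general K N hN
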